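/- Let n ≥ 6 be a rational integer such that p = (2n−1)(2n+1), q = (2n−1)(2n+3) and r = (2n+1)(2n+3) are all square-free, let K = ℚ(√p, √q), set ε_p = 2n + √p, ε_r = 2n + 2 + √r, μ = n + 3/2 + (1/2)√p + (1/2)√q + (1/2)√r, α_t = 1 + ε_p + t(μ−1) and ω_t = (ε_r^{−1} + ε_p)/2 + t(μ−2). Then N((ε_p^{−1}+ε_r)/2) = (2n+1)², N(μ) = 4, N(α_t) = ((4n+2)(t+1) − t²)² for 3 ≤ t ≤ 2n−2, and N(ω_t) = (2n+1 + (4n+2)t − 2t²)² for 2 ≤ t ≤ 2n−1, where N denotes the field norm from K to ℚ. -/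

import Mathlib

/-!
`K` is biquadratic with `ℚ`-basis `1, √p, √q, √p√q`: the family is independent because `p`, `q`
and `pq = (2n-1)²r` are not squares in `ℚ`, and it spans because `√p, √q` generate `K`.
In this basis the multiplication matrix of `A + B√p + C√q + D√p√q` has determinant
`(A² + pB² - qC² - pqD²)² - p(2AB - 2qCD)²`, i.e. the norm taken through `ℚ(√p)`. Each element
of the family is written in this basis (the units `ε` are inverted via their conjugates) and the
formula is evaluated.
-/

open NumberField

theorem Rat.not_isSquare_intCast_of_squarefree {m : ℤ} (hm : Squarefree m) (hu : ¬IsUnit m) :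
    ¬IsSquare (m : ℚ) := by
  rintro h
  obtain ⟨r, rfl⟩ := Rat.isSquare_intCast_iff.mp h
  exact hu ((hm r dvd_rfl).mul (hm r dvd_rfl))

theorem Matrix.det_fin_four_of {R : Type*} [CommRing R] (a b c d e f g h i j k l m o s t : R) :
    det !![a, b, c, d; e, f, g, h; i, j, k, l; m, o, s, t] =
      a * (f * (k * t - l * s) - g * (j * t - l * o) + h * (j * s - k * o))
      - b * (e * (k * t - l * s) - g * (i * t - l * m) + h * (i * s - k * m))
      + c * (e * (j * t - l * o) - f * (i * t - l * m) + h * (i * o - j * m))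
      - d * (e * (j * s - k * o) - f * (i * s - k * m) + g * (i * o - j * m)) := by
  rw [det_succ_row_zero, Fin.sum_univ_four]
  simp only [det_fin_three, Fin.isValue, Fin.coe_ofNat_eq_mod, Nat.zero_mod, pow_zero,
    of_apply, cons_val', cons_val_zero, cons_val_fin_one, one_mul, Fin.succAbove_zero, submatrix_apply,
    Fin.succ_zero_eq_one, cons_val_one, Fin.succ_one_eq_two, cons_val, Fin.reduceSucc, Nat.one_mod,
    pow_one, neg_mul, Fin.succAbove, Fin.castSucc_zero, zero_lt_one, ↓reduceIte, Fin.castSucc_one,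
    lt_self_iff_false, Fin.reduceCastSucc, Fin.lt_one_iff, Fin.reduceEq, Fin.reduceLT, Nat.mod_succ]
  ring

theorem inv_add_eq_sub_of_sq_sub_sq_eq_one {K : Type*} [Field K] {x s : K}
    (h : x ^ 2 - s ^ 2 = 1) : (x + s)⁻¹ = x - s :=
  inv_eq_of_mul_eq_one_right (by linear_combination h)

theorem adjoin_le_span_biquadratic {R A : Type*} [CommRing R] [CommRing A] [Algebra R A]
    {s t : A} {a b : R} (hs : s ^ 2 = algebraMap R A a) (ht : t ^ 2 = algebraMap R A b) :
    Subalgebra.toSubmodule (Algebra.adjoin R {s, t}) ≤ Submodule.span R {1, s, t, s * t} := by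
  set W := Submodule.span R {1, s, t, s * t}
  have mem_W : ∀ {z : A}, z ∈ ({1, s, t, s * t} : Set A) → z ∈ W := fun h => Submodule.subset_span h
  have smul_mem_W : ∀ (c : R) {z : A}, z ∈ ({1, s, t, s * t} : Set A) → algebraMap R A c * z ∈ W :=
    fun c _ h => by rw [← Algebra.smul_def]; exact W.smul_mem c (mem_W h)
  have mul_mem_W : ∀ z ∈ ({s, t} : Set A), ∀ w ∈ W, z * w ∈ W := by
    rintro z hz y hy
    refine (Submodule.map_span_le (LinearMap.mulLeft R z) _ W).mpr ?_ ⟨y, hy, rfl⟩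
    rcases hz with rfl | rfl
    · rintro w (rfl | rfl | rfl | rfl) <;> simp only [LinearMap.mulLeft_apply]
      · simpa using mem_W (by simp)
      · simpa [← sq, hs] using smul_mem_W a (z := 1) (by simp)
      · exact mem_W (by simp)
      · simpa [← mul_assoc, ← sq, hs] using smul_mem_W a (z := t) (by simp)
    · rintro w (rfl | rfl | rfl | rfl) <;> simp only [LinearMap.mulLeft_apply]
      · simpa using mem_W (by simp)
      · rw [mul_comm]; exact mem_W (by simp)
      · simpa [← sq, ht] using smul_mem_W b (z := 1) (by simp)
      · rw [mul_left_comm, ← sq, ht, mul_comm]; exact smul_mem_W b (z := s) (by simp)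
  intro x hx
  simpa using Algebra.adjoin_induction (p := fun x _ => ∀ w ∈ W, x * w ∈ W)
    (fun z hz => mul_mem_W z hz)
    (fun c w hw => by rw [← Algebra.smul_def]; exact W.smul_mem c hw)
    (fun x y _ _ hx hy w hw => by rw [add_mul]; exact W.add_mem (hx w hw) (hy w hw))
    (fun x y _ _ hx hy w hw => by rw [mul_assoc]; exact hx _ (hy w hw))
    hx 1 (mem_W (by simp))

section Biquadratic

variable {F K : Type*} [Field F] [Field K] [Algebra F K]

theorem eq_zero_of_add_mul_sqrt_eq_zero {s : K} {a : F} (hs : s ^ 2 = algebraMap F K a)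
    (ha : ¬IsSquare a) {x y : F} (h : algebraMap F K x + algebraMap F K y * s = 0) :
    x = 0 ∧ y = 0 := by
  have hy : y = 0 := by
    by_contra hy
    have hs' : s = algebraMap F K (-x / y) := by
      rw [map_div₀, map_neg, eq_div_iff (by simpa using hy)]
      linear_combination h
    exact ha ⟨-x / y, (FaithfulSMul.algebraMap_injective F K) (by rw [← hs, hs']; simp [sq])⟩
  subst hy
  simpa using h

theorem eq_zero_of_mul_sqrt_eq_add_mul_sqrt (h2 : (2 : F) ≠ 0) {s t : K} {a b : F}
    (hs : s ^ 2 = algebraMap F K a) (ht : t ^ 2 = algebraMap F K b)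
    (ha : ¬IsSquare a) (hb : ¬IsSquare b) (hab : ¬IsSquare (a * b)) {w c d : F}
    (h : algebraMap F K w * t = algebraMap F K c + algebraMap F K d * s) : w = 0 := by
  by_contra hw
  -- squaring puts `w ^ 2 * b` into `F + F s`, so `2 c d = 0`
  obtain ⟨hrat, hirr⟩ := eq_zero_of_add_mul_sqrt_eq_zero hs ha
    (x := w ^ 2 * b - c ^ 2 - d ^ 2 * a) (y := -(2 * c * d)) (by
      simp only [map_sub, map_mul, map_pow, map_neg, map_ofNat]
      linear_combination (algebraMap F K w * t + algebraMap F K c + algebraMap F K d * s) * h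
        - algebraMap F K w ^ 2 * ht + algebraMap F K d ^ 2 * hs)
  rcases mul_eq_zero.mp (show 2 * c * d = 0 by linear_combination -hirr) with hc | hd
  · have hc : c = 0 := (mul_eq_zero.mp hc).resolve_left h2
    exact hab ⟨d * a / w, by field_simp; linear_combination a * hrat + a * c * hc⟩
  · exact hb ⟨c / w, by field_simp; linear_combination hrat + d * a * hd⟩

theorem linearIndependent_biquadratic (h2 : (2 : F) ≠ 0) {s t : K} {a b : F}
    (hs : s ^ 2 = algebraMap F K a) (ht : t ^ 2 = algebraMap F K b)
    (ha : ¬IsSquare a) (hb : ¬IsSquare b) (hab : ¬IsSquare (a * b)) :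
    LinearIndependent F ![1, s, t, s * t] := by
  rw [Fintype.linearIndependent_iff]
  intro g hg
  simp only [Fin.sum_univ_four, Matrix.cons_val, Algebra.smul_def, mul_one] at hg
  set x := g 0
  set y := g 1
  set u := g 2
  set v := g 3
  -- multiplying by the conjugate `u - v s` of the coefficient of `t`
  have hnorm : u ^ 2 - v ^ 2 * a = 0 :=
    eq_zero_of_mul_sqrt_eq_add_mul_sqrt h2 hs ht ha hb hab
      (c := -(x * u - y * v * a)) (d := -(y * u - x * v)) (by
        simp only [map_sub, map_mul, map_pow, map_neg]
        linear_combination (algebraMap F K u - algebraMap F K v * s) * hg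
          + (algebraMap F K v ^ 2 * t + algebraMap F K y * algebraMap F K v) * hs)
  have huv : u = 0 ∧ v = 0 := by
    have hprod : (algebraMap F K u + algebraMap F K v * s) *
        (algebraMap F K u + algebraMap F K (-v) * s) = 0 := by
      have := congrArg (algebraMap F K) hnorm
      simp only [map_sub, map_mul, map_pow, map_zero] at this
      rw [map_neg]
      linear_combination this - algebraMap F K v ^ 2 * hs
    rcases mul_eq_zero.mp hprod with h | h
    · exact eq_zero_of_add_mul_sqrt_eq_zero hs ha h
    · simpa using eq_zero_of_add_mul_sqrt_eq_zero hs ha h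
  obtain ⟨hx, hy⟩ : x = 0 ∧ y = 0 :=
    eq_zero_of_add_mul_sqrt_eq_zero hs ha (by simpa [huv.1, huv.2] using hg)
  intro i
  fin_cases i
  exacts [hx, hy, huv.1, huv.2]

theorem norm_biquadratic (h2 : (2 : F) ≠ 0) {s t : K} {a b : F}
    (hs : s ^ 2 = algebraMap F K a) (ht : t ^ 2 = algebraMap F K b)
    (ha : ¬IsSquare a) (hb : ¬IsSquare b) (hab : ¬IsSquare (a * b))
    (hgen : Algebra.adjoin F {s, t} = ⊤) (A B C D : F) :
    Algebra.norm F (algebraMap F K A + algebraMap F K B * s + algebraMap F K C * t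
      + algebraMap F K D * (s * t)) =
      (A ^ 2 + a * B ^ 2 - b * C ^ 2 - a * b * D ^ 2) ^ 2 - a * (2 * A * B - 2 * b * C * D) ^ 2 := by
  have hspan : ⊤ ≤ Submodule.span F (Set.range ![1, s, t, s * t]) := by
    rw [← Algebra.top_toSubmodule, ← hgen]
    simpa only [Matrix.range_cons, Matrix.range_empty, Set.singleton_union, Set.union_empty]
      using adjoin_le_span_biquadratic hs ht
  let bs := Module.Basis.mk (linearIndependent_biquadratic h2 hs ht ha hb hab) hspan
  have hrepr : ∀ (z : K) (c₀ c₁ c₂ c₃ : F), z = algebraMap F K c₀ + algebraMap F K c₁ * s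
      + algebraMap F K c₂ * t + algebraMap F K c₃ * (s * t) →
      ∀ i, bs.repr z i = ![c₀, c₁, c₂, c₃] i := by
    intro z c₀ c₁ c₂ c₃ hz i
    have hsum : z = ∑ k, ![c₀, c₁, c₂, c₃] k • bs k := by
      simp [hz, bs, Fin.sum_univ_four, Algebra.smul_def]
    rw [hsum, bs.repr_sum_self]
  set x := algebraMap F K A + algebraMap F K B * s + algebraMap F K C * t
    + algebraMap F K D * (s * t)
  have hM : Algebra.leftMulMatrix bs x =
      !![A, a * B, b * C, a * b * D; B, A, b * D, b * C; C, a * D, A, a * B; D, C, B, A] := by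
    ext i j
    rw [Algebra.leftMulMatrix_eq_repr_mul, Module.Basis.mk_apply]
    fin_cases j
    · rw [hrepr _ A B C D (by simp [x])]
      fin_cases i <;> rfl
    · rw [hrepr _ (a * B) A (a * D) C (by
        simp only [x, map_mul, Fin.mk_one, Matrix.cons_val]
        linear_combination (algebraMap F K B + algebraMap F K D * t) * hs)]
      fin_cases i <;> rfl
    · rw [hrepr _ (b * C) (b * D) A B (by
        simp only [x, map_mul, Fin.reduceFinMk, Matrix.cons_val]
        linear_combination (algebraMap F K C + algebraMap F K D * s) * ht)]
      fin_cases i <;> rfl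
    · rw [hrepr _ (a * b * D) (b * C) (a * B) A (by
        simp only [x, map_mul, Fin.reduceFinMk, Matrix.cons_val]
        linear_combination (algebraMap F K B * t + algebraMap F K D * t ^ 2) * hs
          + (algebraMap F K C * s + algebraMap F K D * algebraMap F K a) * ht)]
      fin_cases i <;> rfl
  rw [Algebra.norm_eq_matrix_det bs, hM, Matrix.det_fin_four_of]
  ring

end Biquadratic

theorem norm_first_family {n p q r : ℤ} (hn : 1 ≤ n)
    (hp : p = (2 * n - 1) * (2 * n + 1)) (hq : q = (2 * n - 1) * (2 * n + 3))
    (hr : r = (2 * n + 1) * (2 * n + 3))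
    (hpsf : Squarefree p) (hqsf : Squarefree q) (hrsf : Squarefree r)
    {K : Type*} [Field K] [CharZero K] {sp sq sr : K} (hsp : sp ^ 2 = (p : K))
    (hsq : sq ^ 2 = (q : K)) (hmul : sp * sq = (2 * (n : K) - 1) * sr)
    (hgen : Algebra.adjoin ℚ {sp, sq} = ⊤) (A B C D : ℚ) :
    Algebra.norm ℚ ((A : K) + B * sp + C * sq + D * sr) =
      (A ^ 2 + p * B ^ 2 - q * C ^ 2 - r * D ^ 2) ^ 2 - p * (2 * A * B - 2 * (2 * n + 3) * C * D) ^ 2 := by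
  have hk : 2 * n - 1 ≠ 0 := by omega
  have hkQ : 2 * (n : ℚ) - 1 ≠ 0 := by exact_mod_cast hk
  have hkK : 2 * (n : K) - 1 ≠ 0 := by exact_mod_cast hk
  have not_unit : ∀ m : ℤ, 1 < m → ¬IsUnit m := fun m hm h => by
    rcases Int.isUnit_iff.mp h with h | h <;> omega
  have ha := Rat.not_isSquare_intCast_of_squarefree hpsf (not_unit p (by rw [hp]; nlinarith))
  have hb := Rat.not_isSquare_intCast_of_squarefree hqsf (not_unit q (by rw [hq]; nlinarith))
  have hc := Rat.not_isSquare_intCast_of_squarefree hrsf (not_unit r (by rw [hr]; nlinarith))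
  -- `p q = (2n - 1)² r`
  have hab : ¬IsSquare ((p : ℚ) * q) := fun h => hc <| by
    rw [show (r : ℚ) = p * q / (2 * n - 1) ^ 2 by rw [hp, hq, hr]; push_cast; field_simp]
    exact h.div (IsSquare.sq _)
  have hsr : sr = (2 * (n : K) - 1)⁻¹ * (sp * sq) := by
    rw [hmul, inv_mul_cancel_left₀ hkK]
  rw [hsr, show (A : K) + B * sp + C * sq + D * ((2 * (n : K) - 1)⁻¹ * (sp * sq)) =
      algebraMap ℚ K A + algebraMap ℚ K B * sp + algebraMap ℚ K C * sq
        + algebraMap ℚ K (D / (2 * n - 1)) * (sp * sq) by simp only [eq_ratCast]; push_cast; ring,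
    norm_biquadratic two_ne_zero (by simpa using hsp) (by simpa using hsq) ha hb hab hgen]
  rw [hp, hq, hr]; push_cast; field_simp

theorem norms_of_indecomposables_first_family
    (n p q r : ℤ) (hn : 6 ≤ n)
    (hp : p = (2 * n - 1) * (2 * n + 1)) (hq : q = (2 * n - 1) * (2 * n + 3))
    (hr : r = (2 * n + 1) * (2 * n + 3))
    (hpsf : Squarefree p) (hqsf : Squarefree q) (hrsf : Squarefree r)
    (K : Type*) [Field K] [NumberField K]
    (sp sq sr : K) (hsp : sp ^ 2 = (p : K)) (hsq : sq ^ 2 = (q : K))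
    (hsr : sr ^ 2 = (r : K)) (hmul : sp * sq = (2 * (n : K) - 1) * sr)
    (hgen : Algebra.adjoin ℚ {sp, sq} = ⊤)
    (εp εr μ : K)
    (hεp : εp = 2 * (n : K) + sp) (hεr : εr = 2 * (n : K) + 2 + sr)
    (hμ : μ = (n : K) + 3 / 2 + (1 / 2) * sp + (1 / 2) * sq + (1 / 2) * sr) :
    Algebra.norm ℚ ((εp⁻¹ + εr) / 2) = (2 * (n : ℚ) + 1) ^ 2 ∧
    Algebra.norm ℚ μ = 4 ∧
    (∀ t : ℤ, 3 ≤ t → t ≤ 2 * n - 2 →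
      Algebra.norm ℚ (1 + εp + (t : K) * (μ - 1)) =
        ((4 * (n : ℚ) + 2) * ((t : ℚ) + 1) - (t : ℚ) ^ 2) ^ 2) ∧
    (∀ t : ℤ, 2 ≤ t → t ≤ 2 * n - 1 →
      Algebra.norm ℚ ((εr⁻¹ + εp) / 2 + (t : K) * (μ - 2)) =
        (2 * (n : ℚ) + 1 + (4 * (n : ℚ) + 2) * (t : ℚ) - 2 * (t : ℚ) ^ 2) ^ 2) := by
  have hN := norm_first_family (by omega) hp hq hr hpsf hqsf hrsf hsp hsq hmul hgen
  subst hp hq hr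
  have hεp_inv : εp⁻¹ = 2 * n - sp := by
    rw [hεp]
    exact inv_add_eq_sub_of_sq_sub_sq_eq_one (by rw [hsp]; push_cast; ring)
  have hεr_inv : εr⁻¹ = 2 * n + 2 - sr := by
    rw [hεr]
    exact inv_add_eq_sub_of_sq_sub_sq_eq_one (by rw [hsr]; push_cast; ring)
  refine ⟨?_, ?_, fun t _ _ => ?_, fun t _ _ => ?_⟩
  · rw [show (εp⁻¹ + εr) / 2 = ((2 * n + 1 : ℚ) : K) + ((-1 / 2 : ℚ) : K) * sp + ((0 : ℚ) : K) * sq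
      + ((1 / 2 : ℚ) : K) * sr by rw [hεp_inv, hεr]; push_cast; ring, hN]
    push_cast; ring
  · rw [show μ = ((n + 3 / 2 : ℚ) : K) + ((1 / 2 : ℚ) : K) * sp + ((1 / 2 : ℚ) : K) * sq
      + ((1 / 2 : ℚ) : K) * sr by rw [hμ]; push_cast; ring, hN]
    push_cast; ring
  · rw [show 1 + εp + (t : K) * (μ - 1) = ((2 * n + 1 + t * (n + 1 / 2) : ℚ) : K)
      + ((1 + t / 2 : ℚ) : K) * sp + ((t / 2 : ℚ) : K) * sq + ((t / 2 : ℚ) : K) * sr by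
      rw [hεp, hμ]; push_cast; ring, hN]
    push_cast; ring
  · rw [show (εr⁻¹ + εp) / 2 + (t : K) * (μ - 2) = ((2 * n + 1 + t * (n - 1 / 2) : ℚ) : K)
      + (((1 + t) / 2 : ℚ) : K) * sp + ((t / 2 : ℚ) : K) * sq + (((t - 1) / 2 : ℚ) : K) * sr by
      rw [hεr_inv, hεp, hμ]; push_cast; ring, hN]
    push_cast; ring
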